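/- Let X be a real-valued random variable with unbounded distribution F and Y a nonnegative random variable with distribution G, neither degenerate at zero, and suppose (X,Y) follows a Sarmanov distribution with kernels φ₁, φ₂ and parameter θ. Assume there exist constants c>0, d₁∈(0,∞) and a measurable function ψ such that ψ(y)=lim_{δ→0+} (∫_{y−δ}^{y+δ} φ₂(v)G(dv))/(G(y+δ)−G(y−δ)) for all y in the support D_Y of Y, φ₁(x)→d₁ as x→∞, and P(1+θd₁ψ(Y)≥c)=1. Then P(X>x | Y=y) ~ (1+θd₁ψ(y)) F̄(x) as x→∞ uniformly in y∈D_Y. -/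

import Mathlib

open MeasureTheory ProbabilityTheory Filter Set Asymptotics

noncomputable section

/-- The tail (survival) function `x ↦ P(Z > x)` of a random variable `Z`. -/
def rvTail {Ω : Type*} [MeasureSpace Ω] (Z : Ω → ℝ) (x : ℝ) : ℝ :=
  (ℙ {ω | x < Z ω}).toReal

/-- The cumulative distribution function `x ↦ P(Z ≤ x)` of a random variable `Z`. -/
def rvCdf {Ω : Type*} [MeasureSpace Ω] (Z : Ω → ℝ) (x : ℝ) : ℝ :=
  (ℙ {ω | Z ω ≤ x}).toReal

/-- The left limit of the cdf, `G(y-) = P(Z < y)`. -/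
def rvCdfLeft {Ω : Type*} [MeasureSpace Ω] (Z : Ω → ℝ) (y : ℝ) : ℝ :=
  (ℙ {ω | Z ω < y}).toReal

/-- The distribution of `Z` is unbounded (above): its tail is positive for every `x > 0`. -/
def UnboundedDist {Ω : Type*} [MeasureSpace Ω] (Z : Ω → ℝ) : Prop :=
  ∀ x > 0, 0 < rvTail Z x

/-- The support `D_Z = {y : P(Z ∈ (y - δ, y + δ)) > 0 for all δ > 0}` of the
distribution of `Z`. -/
def distSupport {Ω : Type*} [MeasureSpace Ω] (Z : Ω → ℝ) : Set ℝ :=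
  {y | ∀ δ > 0, 0 < ℙ {ω | Z ω ∈ Ioo (y - δ) (y + δ)}}

/-- The distribution of `Z` belongs to the class `L(γ)`: it is unbounded above and
`P(Z > x - t) ~ e^{γ t} P(Z > x)` as `x → ∞`, for every `t > 0`. -/
def MemLGamma {Ω : Type*} [MeasureSpace Ω] (Z : Ω → ℝ) (γ : ℝ) : Prop :=
  UnboundedDist Z ∧
    ∀ t > 0, (fun x => rvTail Z (x - t)) ~[atTop] (fun x => Real.exp (γ * t) * rvTail Z x)

/-- The tail of the two-fold convolution of the distribution of `Z` with itself. -/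
def convSqTail {Ω : Type*} [MeasureSpace Ω] (Z : Ω → ℝ) (x : ℝ) : ℝ :=
  (((Measure.map Z ℙ).conv (Measure.map Z ℙ)) (Ioi x)).toReal

/-- The distribution of `Z` belongs to the class `S(γ)`: it belongs to `L(γ)`, the
exponential moment `c = ∫ e^{γ y} dV(y)` is finite, and the tail of the two-fold
convolution satisfies `V̄*²(x) ~ 2 c V̄(x)` as `x → ∞`. -/
def MemSGamma {Ω : Type*} [MeasureSpace Ω] (Z : Ω → ℝ) (γ : ℝ) : Prop :=
  MemLGamma Z γ ∧
    Integrable (fun y => Real.exp (γ * y)) (Measure.map Z ℙ) ∧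
    (fun x => convSqTail Z x) ~[atTop]
      (fun x => 2 * (∫ y, Real.exp (γ * y) ∂(Measure.map Z ℙ)) * rvTail Z x)

open Classical in
/-- `γ / β_G`, where `β_G = sup {y : G(y) < 1}` is the right endpoint of the distribution
of `Z`, with the convention that `γ / β_G = 0` when `β_G = ∞`.
(Note that `G(y) < 1 ↔ P(Z > y) > 0`.) -/
def gammaOverBeta {Ω : Type*} [MeasureSpace Ω] (Z : Ω → ℝ) (γ : ℝ) : ℝ :=
  if BddAbove {y : ℝ | 0 < rvTail Z y} then γ / sSup {y : ℝ | 0 < rvTail Z y} else 0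

/-- Assumption 2: `Ḡ(b x) = o(H̄(x))` as `x → ∞` for every constant `b > 0`, where `G` is
the distribution of `Y` and `H` is the distribution of the product `X Y`. -/
def Assumption2 {Ω : Type*} [MeasureSpace Ω] (X Y : Ω → ℝ) : Prop :=
  ∀ b > 0, (fun x => rvTail Y (b * x)) =o[atTop] fun x => rvTail (fun ω => X ω * Y ω) x

/-- Assumption 1: `K x y` is the conditional probability `P(X > x | Y = y)`, namely for
`y` in the support of `Y` it is the limit of `P(X > x | Y ∈ (y - δ, y + δ])` as `δ → 0+`,
and for `y` outside the support it is the unconditional probability `P(X > x)` (and then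
`h y = 1`); `h : [0,∞) → (0,∞)` is a measurable function such that
`P(X > x | Y = y) ~ h(y) P(X > x)` as `x → ∞`, uniformly for `y ≥ 0`. -/
def Assumption1 {Ω : Type*} [MeasureSpace Ω] (X Y : Ω → ℝ) (h : ℝ → ℝ) (K : ℝ → ℝ → ℝ) :
    Prop :=
  Measurable h ∧ (∀ y, 0 ≤ y → 0 < h y) ∧
    (∀ y, y ∉ distSupport Y → h y = 1 ∧ ∀ x, K x y = rvTail X x) ∧
    (∀ y ∈ distSupport Y, ∀ x : ℝ,
      Tendsto
        (fun δ : ℝ => (ℙ {ω | x < X ω ∧ Y ω ∈ Ioc (y - δ) (y + δ)}).toReal /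
          (ℙ {ω | Y ω ∈ Ioc (y - δ) (y + δ)}).toReal)
        (nhdsWithin 0 (Ioi 0)) (nhds (K x y))) ∧
    ∀ ε > 0, ∀ᶠ x in atTop, ∀ y, 0 ≤ y → |K x y / (h y * rvTail X x) - 1| < ε

/-- `(X, Y)` follows a Farlie–Gumbel–Morgenstern (FGM) distribution with parameter
`θ ∈ [-1, 1]`: `P(X > x, Y > y) = F̄(x) Ḡ(y) (1 + θ F(x) G(y))` for all `x` in the
support of `X` and `y` in the support of `Y`. -/
def FGM {Ω : Type*} [MeasureSpace Ω] (X Y : Ω → ℝ) (θ : ℝ) : Prop :=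
  θ ∈ Icc (-1 : ℝ) 1 ∧
    ∀ x ∈ distSupport X, ∀ y ∈ distSupport Y,
      (ℙ {ω | x < X ω ∧ y < Y ω}).toReal =
        rvTail X x * rvTail Y y * (1 + θ * rvCdf X x * rvCdf Y y)

/-- `(X, Y)` follows a bivariate Sarmanov distribution with kernels `φ₁, φ₂` and
parameter `θ`: the joint law has density `1 + θ φ₁(x) φ₂(y)` with respect to the product
of the marginal laws, where `φ₁, φ₂` are measurable, `E φ₁(X) = E φ₂(Y) = 0` and
`1 + θ φ₁(x) φ₂(y) ≥ 0`. -/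
def Sarmanov {Ω : Type*} [MeasureSpace Ω] (X Y : Ω → ℝ) (φ₁ φ₂ : ℝ → ℝ) (θ : ℝ) : Prop :=
  Measurable φ₁ ∧ Measurable φ₂ ∧
    Integrable (fun ω => φ₁ (X ω)) ℙ ∧ Integrable (fun ω => φ₂ (Y ω)) ℙ ∧
    (∫ ω, φ₁ (X ω)) = 0 ∧ (∫ ω, φ₂ (Y ω)) = 0 ∧
    (∀ x y : ℝ, 0 ≤ y → 0 ≤ 1 + θ * φ₁ x * φ₂ y) ∧
    Measure.map (fun ω => (X ω, Y ω)) ℙ =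
      ((Measure.map X ℙ).prod (Measure.map Y ℙ)).withDensity
        (fun p => ENNReal.ofReal (1 + θ * φ₁ p.1 * φ₂ p.2))

/-- The condition `ψ(y) = lim_{δ → 0+} (∫_{y-δ}^{y+δ} φ₂(v) G(dv)) / (G(y+δ) - G(y-δ))`
for all `y` in the support of `Y`. -/
def SarmanovPsi {Ω : Type*} [MeasureSpace Ω] (Y : Ω → ℝ) (φ₂ ψ : ℝ → ℝ) : Prop :=
  ∀ y ∈ distSupport Y,
    Tendsto
      (fun δ : ℝ => (∫ v in Ioc (y - δ) (y + δ), φ₂ v ∂(Measure.map Y ℙ)) /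
        (rvCdf Y (y + δ) - rvCdf Y (y - δ)))
      (nhdsWithin 0 (Ioi 0)) (nhds (ψ y))


/-!
Integrating the Sarmanov density over `(x, ∞) × (y - δ, y + δ]` gives
`P(X > x, Y ∈ (y - δ, y + δ]) = F̄(x) G(y - δ, y + δ] + θ (∫_{(x,∞)} φ₁ dF) (∫_{(y-δ,y+δ]} φ₂ dG)`,
so dividing by `G(y - δ, y + δ]` and letting `δ → 0` gives
`P(X > x | Y = y) = F̄(x) + θ ψ(y) ∫_{(x,∞)} φ₁ dF`. As `φ₁ → d₁`, this integral is
`d₁ F̄(x) + o(F̄(x))`, so the relative error is `θ ψ(y) o(1) / (1 + θ d₁ ψ(y))`, and it is small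
uniformly in `y` because `1 + θ d₁ ψ(y) ≥ c` bounds `|θ ψ(y)|` by a multiple of `1 + θ d₁ ψ(y)`.
That lower bound is only assumed almost surely; it extends to every point of the support since
`ψ = φ₂` almost everywhere (Lebesgue differentiation), so that `ψ(y)` is a limit of averages of a
function bounded below almost everywhere.
-/

open Topology Metric

theorem Set.Countable.nhdsWithin_Ioi_diff_neBot {S : Set ℝ} (hS : S.Countable) (a : ℝ) :
    (𝓝[Ioi a \ S] a).NeBot := by
  rw [← mem_closure_iff_nhdsWithin_neBot, sdiff_eq]
  refine closure_minimal ((hS.dense_compl ℝ).open_subset_closure_inter isOpen_Ioi) isClosed_closure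
    ?_
  rw [closure_Ioi]
  exact self_mem_Ici

theorem Ioc_ae_eq_closedBall_of_measure_ball {μ : Measure ℝ} [IsFiniteMeasure μ] {y δ : ℝ}
    (h : μ (closedBall y δ) ≤ μ (ball y δ)) : Ioc (y - δ) (y + δ) =ᵐ[μ] closedBall y δ := by
  refine ae_eq_of_subset_of_measure_ge ?_ (h.trans (measure_mono ?_))
    measurableSet_Ioc.nullMeasurableSet (measure_ne_top _ _)
  · rw [Real.closedBall_eq_Icc]
    exact Ioc_subset_Icc_self
  · rw [Real.ball_eq_Ioo]
    exact Ioo_subset_Ioc_self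


theorem setAverage_closedBall_eq_of_measure_ball {μ : Measure ℝ} [IsFiniteMeasure μ] {y δ : ℝ}
    (h : μ (closedBall y δ) ≤ μ (ball y δ)) (f : ℝ → ℝ) :
    ⨍ v in closedBall y δ, f v ∂μ =
      (∫ v in Ioc (y - δ) (y + δ), f v ∂μ) / μ.real (Ioc (y - δ) (y + δ)) := by
  have hIoc := Ioc_ae_eq_closedBall_of_measure_ball h
  rw [setAverage_eq, setIntegral_congr_set hIoc, measureReal_congr hIoc, smul_eq_mul,
    div_eq_inv_mul]

theorem ae_eq_of_tendsto_setIntegral_Ioc_div {μ : Measure ℝ} [IsFiniteMeasure μ] {f ψ : ℝ → ℝ}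
    (hf : Integrable f μ)
    (hψ : ∀ᵐ y ∂μ, Tendsto (fun δ => (∫ v in Ioc (y - δ) (y + δ), f v ∂μ) /
      μ.real (Ioc (y - δ) (y + δ))) (𝓝[>] 0) (𝓝 (ψ y))) :
    ψ =ᵐ[μ] f := by
  filter_upwards [(Besicovitch.vitaliFamily μ).ae_tendsto_average hf.locallyIntegrable, hψ]
    with y hf_lim hψ_lim
  -- closed balls and open balls around `y` differ in measure for only countably many radii
  set S := Neg.neg ⁻¹' {t : ℝ | μ {v | t ≤ -dist v y} ≠ μ {v | t < -dist v y}}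
  have hS : S.Countable := (countable_meas_le_ne_meas_lt μ _).preimage neg_injective
  have := hS.nhdsWithin_Ioi_diff_neBot 0
  have hball : ∀ δ ∉ S, μ (closedBall y δ) ≤ μ (ball y δ) := by
    intro δ hδ
    have hδ' : μ {v | -δ ≤ -dist v y} = μ {v | -δ < -dist v y} := not_not.1 hδ
    simp only [neg_le_neg_iff, neg_lt_neg_iff] at hδ'
    exact hδ'.le
  refine tendsto_nhds_unique (hψ_lim.mono_left (nhdsWithin_mono _ (sdiff_subset (t := S)))) ?_
  refine ((hf_lim.comp (Besicovitch.tendsto_filterAt μ y)).mono_left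
    (nhdsWithin_mono _ sdiff_subset)).congr' ?_
  filter_upwards [self_mem_nhdsWithin] with δ hδ
  exact setAverage_closedBall_eq_of_measure_ball (hball δ hδ.2) f

theorem le_of_tendsto_setIntegral_div {ι : Type*} {l : Filter ι} [l.NeBot] {μ : Measure ℝ}
    [IsFiniteMeasure μ] {f : ℝ → ℝ} {s : ι → Set ℝ} {a L : ℝ} (hf : Integrable f μ)
    (hpos : ∀ᶠ i in l, 0 < μ (s i)) (hle : ∀ᵐ v ∂μ, a ≤ f v)
    (hlim : Tendsto (fun i => (∫ v in s i, f v ∂μ) / μ.real (s i)) l (𝓝 L)) : a ≤ L := by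
  refine ge_of_tendsto hlim ?_
  filter_upwards [hpos] with i hi
  have hi' : 0 < μ.real (s i) := ENNReal.toReal_pos hi.ne' (measure_ne_top _ _)
  rw [le_div_iff₀ hi']
  calc a * μ.real (s i) = ∫ _ in s i, a ∂μ := by rw [setIntegral_const, smul_eq_mul, mul_comm]
    _ ≤ ∫ v in s i, f v ∂μ :=
      setIntegral_mono_ae (integrableOn_const (measure_ne_top _ _)) hf.integrableOn hle

theorem isLittleO_setIntegral_Ioi_sub {μ : Measure ℝ} [IsFiniteMeasure μ] {φ : ℝ → ℝ} {d : ℝ}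
    (hφ : Integrable φ μ) (hlim : Tendsto φ atTop (𝓝 d)) :
    (fun x => (∫ u in Ioi x, φ u ∂μ) - d * μ.real (Ioi x)) =o[atTop] fun x => μ.real (Ioi x) := by
  refine IsLittleO.of_bound fun ε hε => ?_
  obtain ⟨N, hN⟩ := Metric.tendsto_atTop.1 hlim ε hε
  filter_upwards [eventually_ge_atTop N] with x hx
  have hsub : (∫ u in Ioi x, φ u ∂μ) - d * μ.real (Ioi x) = ∫ u in Ioi x, (φ u - d) ∂μ := by
    rw [integral_sub hφ.integrableOn (integrableOn_const (measure_ne_top _ _)), setIntegral_const,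
      smul_eq_mul, mul_comm]
  rw [hsub, Real.norm_of_nonneg measureReal_nonneg]
  exact norm_setIntegral_le_of_norm_le_const (measure_lt_top _ _)
    fun u hu => (hN u (hx.trans (le_of_lt hu))).le

theorem measureReal_withDensity_one_add_mul_prod {α β : Type*} [MeasurableSpace α]
    [MeasurableSpace β] {F : Measure α} {G : Measure β} [IsFiniteMeasure F] [IsFiniteMeasure G]
    {φ₁ : α → ℝ} {φ₂ : β → ℝ} {θ : ℝ} (hφ₁ : Integrable φ₁ F) (hφ₂ : Integrable φ₂ G)
    (hnonneg : ∀ᵐ p ∂F.prod G, 0 ≤ 1 + θ * φ₁ p.1 * φ₂ p.2) {A : Set α} {B : Set β}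
    (hA : MeasurableSet A) (hB : MeasurableSet B) :
    ((F.prod G).withDensity fun p => ENNReal.ofReal (1 + θ * φ₁ p.1 * φ₂ p.2)).real (A ×ˢ B) =
      F.real A * G.real B + θ * (∫ u in A, φ₁ u ∂F) * ∫ v in B, φ₂ v ∂G := by
  have hprod : Integrable (fun p : α × β => θ * φ₁ p.1 * φ₂ p.2)
      ((F.restrict A).prod (G.restrict B)) :=
    (hφ₁.const_mul θ).integrableOn.mul_prod hφ₂.integrableOn
  have hdens : Integrable (fun p : α × β => 1 + θ * φ₁ p.1 * φ₂ p.2)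
      ((F.restrict A).prod (G.restrict B)) := (integrable_const 1).add hprod
  rw [measureReal_def, withDensity_apply _ (hA.prod hB), ← Measure.prod_restrict,
    ← integral_eq_lintegral_of_nonneg_ae _ hdens.aestronglyMeasurable]
  · rw [integral_add (integrable_const 1) hprod, integral_const,
      integral_prod_mul (fun u => θ * φ₁ u) φ₂, integral_const_mul, smul_eq_mul, mul_one,
      measureReal_def, ← univ_prod_univ, Measure.prod_prod, ENNReal.toReal_mul,
      Measure.restrict_apply_univ, Measure.restrict_apply_univ]
    rfl
  · rw [Measure.prod_restrict]
    exact ae_restrict_of_ae hnonneg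

theorem abs_le_mul_one_add_mul {c d u : ℝ} (hc : 0 < c) (hd : 0 < d) (h : c ≤ 1 + u * d) :
    |u| ≤ max 1 c⁻¹ / d * (1 + u * d) := by
  rw [div_mul_eq_mul_div, le_div_iff₀ hd, ← abs_of_pos hd, ← abs_mul, abs_of_pos hd]
  rcases le_or_gt 0 (u * d) with hu | hu
  · rw [abs_of_nonneg hu]
    nlinarith [le_max_left 1 c⁻¹]
  · -- here `1 + u * d ≥ c` forces `|u * d| < 1 ≤ c⁻¹ (1 + u * d)`
    rw [abs_of_neg hu]
    have : 1 ≤ c⁻¹ * (1 + u * d) := by rw [inv_mul_eq_div, one_le_div hc]; exact h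
    nlinarith [le_max_right 1 c⁻¹]

theorem eventually_forall_abs_div_sub_one_lt {ι : Type*} {l : Filter ι} {T A : ι → ℝ}
    {θ c d ε : ℝ} (hc : 0 < c) (hd : 0 < d) (hε : 0 < ε) (hT : ∀ᶠ x in l, 0 < T x)
    (hA : (fun x => A x - d * T x) =o[l] T) :
    ∀ᶠ x in l, ∀ t, c ≤ 1 + θ * d * t →
      |(T x + θ * A x * t) / ((1 + θ * d * t) * T x) - 1| < ε := by
  set C := max 1 c⁻¹ / d
  have hC : 0 < C := div_pos (lt_max_of_lt_left one_pos) hd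
  filter_upwards [hT, hA.bound (div_pos hε (mul_pos two_pos hC))] with x hTx hAx t ht
  rw [mul_right_comm θ d t] at ht ⊢
  have hθt := abs_le_mul_one_add_mul hc hd ht
  have hden : 0 < (1 + θ * t * d) * T x := mul_pos (hc.trans_le ht) hTx
  rw [Real.norm_eq_abs, Real.norm_of_nonneg hTx.le] at hAx
  rw [div_sub_one hden.ne', show T x + θ * A x * t - (1 + θ * t * d) * T x =
    θ * t * (A x - d * T x) by ring, abs_div, abs_mul, abs_of_pos hden, div_lt_iff₀ hden]
  calc |θ * t| * |A x - d * T x| ≤ C * (1 + θ * t * d) * (ε / (2 * C) * T x) :=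
        mul_le_mul hθt hAx (abs_nonneg _) (mul_pos hC (hc.trans_le ht)).le
    _ = ε / 2 * ((1 + θ * t * d) * T x) := by field_simp
    _ < ε * ((1 + θ * t * d) * T x) := by nlinarith

section Sarmanov

variable {Ω : Type*} [MeasureSpace Ω] {X Y : Ω → ℝ} {φ₁ φ₂ ψ : ℝ → ℝ} {θ : ℝ}

theorem rvTail_eq_measureReal_map (hX : Measurable X) (x : ℝ) :
    rvTail X x = (Measure.map X ℙ).real (Ioi x) :=
  (map_measureReal_apply hX measurableSet_Ioi).symm

theorem Sarmanov.integrable_fst (h : Sarmanov X Y φ₁ φ₂ θ) (hX : Measurable X) :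
    Integrable φ₁ (Measure.map X ℙ) :=
  (integrable_map_measure h.1.aestronglyMeasurable hX.aemeasurable).2 h.2.2.1

theorem Sarmanov.integrable_snd (h : Sarmanov X Y φ₁ φ₂ θ) (hY : Measurable Y) :
    Integrable φ₂ (Measure.map Y ℙ) :=
  (integrable_map_measure h.2.1.aestronglyMeasurable hY.aemeasurable).2 h.2.2.2.1

theorem distSupport_eq_support (hY : Measurable Y) :
    distSupport Y = (Measure.map Y ℙ).support := by
  ext y
  rw [(nhds_basis_ball (x := y)).mem_measureSupport]
  simp only [distSupport, Real.ball_eq_Ioo, Measure.map_apply hY measurableSet_Ioo]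
  rfl

theorem measure_Ioc_pos_of_mem_distSupport {y δ : ℝ} (hy : y ∈ distSupport Y) (hδ : 0 < δ) :
    0 < ℙ {ω | Y ω ∈ Ioc (y - δ) (y + δ)} :=
  (hy δ hδ).trans_le (measure_mono fun _ hω => Ioo_subset_Ioc_self hω)

variable [IsFiniteMeasure (ℙ : Measure Ω)]

theorem rvCdf_sub_rvCdf (hY : Measurable Y) {a b : ℝ} (hab : a ≤ b) :
    rvCdf Y b - rvCdf Y a = (Measure.map Y ℙ).real (Ioc a b) := by
  have hsplit := measureReal_union (μ := Measure.map Y ℙ) (Iic_disjoint_Ioc (le_refl a) (c := b))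
    measurableSet_Ioc
  rw [Iic_union_Ioc_eq_Iic hab] at hsplit
  rw [map_measureReal_apply hY measurableSet_Iic, map_measureReal_apply hY measurableSet_Iic]
    at hsplit
  change (ℙ (Y ⁻¹' Iic b)).toReal - (ℙ (Y ⁻¹' Iic a)).toReal = _
  simp only [measureReal_def] at hsplit ⊢
  linarith

theorem Sarmanov.prob_lt_and_mem (h : Sarmanov X Y φ₁ φ₂ θ) (hX : Measurable X)
    (hY : Measurable Y) (hY₀ : ∀ ω, 0 ≤ Y ω) (x : ℝ) {B : Set ℝ} (hB : MeasurableSet B) :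
    (ℙ {ω | x < X ω ∧ Y ω ∈ B}).toReal =
      rvTail X x * (Measure.map Y ℙ).real B +
        θ * (∫ u in Ioi x, φ₁ u ∂(Measure.map X ℙ)) * ∫ v in B, φ₂ v ∂(Measure.map Y ℙ) := by
  have hG₀ : ∀ᵐ v ∂(Measure.map Y ℙ), 0 ≤ v :=
    (ae_map_iff hY.aemeasurable measurableSet_Ici).2 (Eventually.of_forall hY₀)
  have hnonneg : ∀ᵐ p ∂(Measure.map X ℙ).prod (Measure.map Y ℙ), 0 ≤ 1 + θ * φ₁ p.1 * φ₂ p.2 :=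
    Measure.quasiMeasurePreserving_snd.ae hG₀ |>.mono fun p hp => h.2.2.2.2.2.2.1 p.1 p.2 hp
  rw [rvTail_eq_measureReal_map hX, ← measureReal_withDensity_one_add_mul_prod
    (h.integrable_fst hX) (h.integrable_snd hY) hnonneg measurableSet_Ioi hB, ← h.2.2.2.2.2.2.2,
    map_measureReal_apply (hX.prodMk hY) (measurableSet_Ioi.prod hB)]
  rfl

theorem SarmanovPsi.tendsto_setIntegral_div (hψ : SarmanovPsi Y φ₂ ψ) (hY : Measurable Y)
    {y : ℝ} (hy : y ∈ distSupport Y) :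
    Tendsto (fun δ => (∫ v in Ioc (y - δ) (y + δ), φ₂ v ∂(Measure.map Y ℙ)) /
      (Measure.map Y ℙ).real (Ioc (y - δ) (y + δ))) (𝓝[>] 0) (𝓝 (ψ y)) := by
  refine (hψ y hy).congr' ?_
  filter_upwards [self_mem_nhdsWithin] with δ hδ
  rw [rvCdf_sub_rvCdf hY (by linarith [mem_Ioi.1 hδ])]

theorem SarmanovPsi.ae_eq (hψ : SarmanovPsi Y φ₂ ψ) (hY : Measurable Y)
    (hφ₂ : Integrable φ₂ (Measure.map Y ℙ)) : ψ =ᵐ[Measure.map Y ℙ] φ₂ :=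
  ae_eq_of_tendsto_setIntegral_Ioc_div hφ₂ <| by
    filter_upwards [Measure.support_mem_ae (μ := Measure.map Y ℙ)] with y hy
    exact hψ.tendsto_setIntegral_div hY ((distSupport_eq_support hY).symm ▸ hy)

theorem SarmanovPsi.le_of_ae_le (hψ : SarmanovPsi Y φ₂ ψ) (hY : Measurable Y)
    (hφ₂ : Integrable φ₂ (Measure.map Y ℙ)) {a k y : ℝ}
    (hle : ∀ᵐ v ∂(Measure.map Y ℙ), a ≤ k * ψ v) (hy : y ∈ distSupport Y) : a ≤ k * ψ y := by
  refine le_of_tendsto_setIntegral_div (l := 𝓝[>] (0 : ℝ))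
    (s := fun δ => Ioc (y - δ) (y + δ)) (hφ₂.const_mul k) ?_
    (by filter_upwards [hle, hψ.ae_eq hY hφ₂] with v hv hψv; rwa [← hψv]) ?_
  · filter_upwards [self_mem_nhdsWithin] with δ hδ
    rw [Measure.map_apply hY measurableSet_Ioc]
    exact measure_Ioc_pos_of_mem_distSupport hy hδ
  · simpa only [integral_const_mul, mul_div_assoc] using
      (hψ.tendsto_setIntegral_div hY hy).const_mul k

theorem Sarmanov.tendsto_condTail (h : Sarmanov X Y φ₁ φ₂ θ) (hψ : SarmanovPsi Y φ₂ ψ)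
    (hX : Measurable X) (hY : Measurable Y) (hY₀ : ∀ ω, 0 ≤ Y ω) {y : ℝ}
    (hy : y ∈ distSupport Y) (x : ℝ) :
    Tendsto (fun δ => (ℙ {ω | x < X ω ∧ Y ω ∈ Ioc (y - δ) (y + δ)}).toReal /
        (ℙ {ω | Y ω ∈ Ioc (y - δ) (y + δ)}).toReal) (𝓝[>] 0)
      (𝓝 (rvTail X x + θ * (∫ u in Ioi x, φ₁ u ∂(Measure.map X ℙ)) * ψ y)) := by
  refine (((hψ.tendsto_setIntegral_div hY hy).const_mul _).const_add _).congr' ?_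
  filter_upwards [self_mem_nhdsWithin] with δ hδ
  have hYIoc : (ℙ {ω | Y ω ∈ Ioc (y - δ) (y + δ)}).toReal =
      (Measure.map Y ℙ).real (Ioc (y - δ) (y + δ)) :=
    (map_measureReal_apply hY measurableSet_Ioc).symm
  have hpos : 0 < (Measure.map Y ℙ).real (Ioc (y - δ) (y + δ)) :=
    hYIoc ▸ ENNReal.toReal_pos (measure_Ioc_pos_of_mem_distSupport hy hδ).ne' (measure_ne_top _ _)
  rw [h.prob_lt_and_mem hX hY hY₀ x measurableSet_Ioc, hYIoc]
  field_simp

end Sarmanov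

theorem cond_tail_asymp_of_sarmanov_general {Ω : Type*} [MeasureSpace Ω] [IsProbabilityMeasure (ℙ : Measure Ω)]
    (X Y : Ω → ℝ) (hXm : Measurable X) (hYm : Measurable Y)
    (hYnonneg : ∀ ω, 0 ≤ Y ω)
    (hFunb : UnboundedDist X)
    (φ₁ φ₂ ψ : ℝ → ℝ) (θ c d₁ : ℝ)
    (hSar : Sarmanov X Y φ₁ φ₂ θ)
    (hc : 0 < c) (hd₁ : 0 < d₁) (hψm : Measurable ψ)
    (hψ : SarmanovPsi Y φ₂ ψ)
    (hφ₁ : Filter.Tendsto φ₁ atTop (nhds d₁))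
    (has : ℙ {ω | c ≤ 1 + θ * d₁ * ψ (Y ω)} = 1) :
    ∃ K : ℝ → ℝ → ℝ,
      (∀ y ∈ distSupport Y, ∀ x : ℝ,
        Tendsto
          (fun δ : ℝ => (ℙ {ω | x < X ω ∧ Y ω ∈ Ioc (y - δ) (y + δ)}).toReal /
            (ℙ {ω | Y ω ∈ Ioc (y - δ) (y + δ)}).toReal)
          (nhdsWithin 0 (Ioi 0)) (nhds (K x y))) ∧
      ∀ ε > 0, ∀ᶠ x in atTop, ∀ y ∈ distSupport Y,
        |K x y / ((1 + θ * d₁ * ψ y) * rvTail X x) - 1| < ε := by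
  have hlowerω : ∀ᵐ ω, c - 1 ≤ θ * d₁ * ψ (Y ω) := by
    have hmeas : MeasurableSet {ω | c ≤ 1 + θ * d₁ * ψ (Y ω)} :=
      measurableSet_le measurable_const (by fun_prop)
    exact ((ae_iff_measure_eq hmeas.nullMeasurableSet).2 (has.trans measure_univ.symm)).mono
      fun ω hω => by linarith
  have hlower : ∀ y ∈ distSupport Y, c ≤ 1 + θ * d₁ * ψ y := fun y hy => by
    linarith [hψ.le_of_ae_le hYm (hSar.integrable_snd hYm)
      ((ae_map_iff hYm.aemeasurable (measurableSet_le measurable_const (by fun_prop))).2 hlowerω)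
      hy]
  have hA := isLittleO_setIntegral_Ioi_sub (hSar.integrable_fst hXm) hφ₁
  simp only [← rvTail_eq_measureReal_map hXm] at hA
  refine ⟨fun x y => rvTail X x + θ * (∫ u in Ioi x, φ₁ u ∂(Measure.map X ℙ)) * ψ y,
    fun y hy x => hSar.tendsto_condTail hψ hXm hYm hYnonneg hy x, fun ε hε => ?_⟩
  filter_upwards [eventually_forall_abs_div_sub_one_lt hc hd₁ hε
    ((eventually_gt_atTop 0).mono hFunb) hA] with x hx y hy
  exact hx (ψ y) (hlower y hy)

theorem cond_tail_asymp_of_sarmanov {Ω : Type*} [MeasureSpace Ω] [IsProbabilityMeasure (ℙ : Measure Ω)]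
    (X Y : Ω → ℝ) (hXm : Measurable X) (hYm : Measurable Y)
    (hYnonneg : ∀ ω, 0 ≤ Y ω)
    (hFunb : UnboundedDist X)
    (hXnd : ℙ {ω | X ω = 0} ≠ 1) (hYnd : ℙ {ω | Y ω = 0} ≠ 1)
    (φ₁ φ₂ ψ : ℝ → ℝ) (θ c d₁ : ℝ)
    (hSar : Sarmanov X Y φ₁ φ₂ θ)
    (hc : 0 < c) (hd₁ : 0 < d₁) (hψm : Measurable ψ)
    (hψ : SarmanovPsi Y φ₂ ψ)
    (hφ₁ : Filter.Tendsto φ₁ atTop (nhds d₁))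
    (has : ℙ {ω | c ≤ 1 + θ * d₁ * ψ (Y ω)} = 1) :
    ∃ K : ℝ → ℝ → ℝ,
      (∀ y ∈ distSupport Y, ∀ x : ℝ,
        Tendsto
          (fun δ : ℝ => (ℙ {ω | x < X ω ∧ Y ω ∈ Ioc (y - δ) (y + δ)}).toReal /
            (ℙ {ω | Y ω ∈ Ioc (y - δ) (y + δ)}).toReal)
          (nhdsWithin 0 (Ioi 0)) (nhds (K x y))) ∧
      ∀ ε > 0, ∀ᶠ x in atTop, ∀ y ∈ distSupport Y,
        |K x y / ((1 + θ * d₁ * ψ y) * rvTail X x) - 1| < ε :=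
  cond_tail_asymp_of_sarmanov_general X Y hXm hYm hYnonneg hFunb φ₁ φ₂ ψ θ c d₁ hSar hc hd₁ hψm hψ
    hφ₁ has
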